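/- arXiv:2404.12572 — 4 statements merged into one kernel-verified Lean document; each statement's English description precedes it below -/
import Mathlib

section
/- Let σ : [0,∞) → [0,∞) be a continuous, monotonically increasing function with σ(z) → ∞ as z → ∞, let 0 ≤ a < T and M > 0. Suppose {ζ_ν}_{ν>0} is a family of monotonically increasing functions in W^{1,1}([a,T]) satisfying the differential inequality dζ_ν/dt ≤ M − ζ_ν² σ(ζ_ν/ν) for almost every t ∈ [a,T]. Then limsup_{ν→0} ζ_ν(T) = 0. -/
/-!
If `ζ_ν(T) > ε`, continuity keeps `ζ_ν > ε` on a left neighbourhood of `T`. There the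
differential inequality forces `ζ_ν' ≤ M - ε² σ(ε/ν)`, which is negative once `ν` is small
because `σ(ε/ν) → ∞`; but a monotone function cannot have a negative derivative. Hence
`ζ_ν(T) ≤ ε` for all small `ν`, and together with `ζ_ν ≥ 0` this gives `ζ_ν(T) → 0`.
-/

open MeasureTheory Filter Set Topology

lemma HasDerivAt.nonneg_of_monotoneOn_Icc {f : ℝ → ℝ} {f' a b t : ℝ}
    (hf : HasDerivAt f f' t) (hmono : MonotoneOn f (Icc a b)) (ht : t ∈ Ioo a b) : 0 ≤ f' := by
  have hacc : AccPt t (𝓟 (Icc a b)) := by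
    simpa using (PerfectSpace.univ_preperfect t (mem_univ t)).nhds_inter (Icc_mem_nhds ht.1 ht.2)
  exact hf.hasDerivWithinAt.nonneg_of_monotoneOn hacc hmono

lemma MonotoneOn.le_of_ae_deriv_neg_above {f f' : ℝ → ℝ} {a T ε : ℝ} (haT : a < T)
    (hmono : MonotoneOn f (Icc a T)) (hcont : ContinuousWithinAt f (Icc a T) T)
    (hderiv : ∀ᵐ t ∂volume.restrict (Icc a T), HasDerivAt f (f' t) t ∧ (ε < f t → f' t < 0)) :
    f T ≤ ε := by
  by_contra! hT
  have hnear : ∀ᶠ t in 𝓝[<] T, ε < f t := by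
    have : ∀ᶠ t in 𝓝[≤] T, ε < f t := by
      rw [← nhdsWithin_Icc_eq_nhdsLE haT]
      exact hcont.eventually (lt_mem_nhds hT)
    exact nhdsWithin_mono T Iio_subset_Iic_self this
  obtain ⟨c, hcT, hc⟩ := mem_nhdsLT_iff_exists_Ioo_subset.1 hnear
  set c' := max a c
  have hsub : Ioo c' T ⊆ Icc a T := fun t ht => ⟨(le_max_left a c).trans ht.1.le, ht.2.le⟩
  have hpos : volume (Ioo c' T) ≠ 0 := by
    simpa [Real.volume_Ioo, c'] using max_lt haT hcT
  have : (ae (volume.restrict (Ioo c' T))).NeBot := ae_restrict_neBot.2 hpos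
  obtain ⟨t, ⟨hd, hneg⟩, ht⟩ :=
    ((ae_restrict_of_ae_restrict_of_subset hsub hderiv).and
      (ae_restrict_mem measurableSet_Ioo)).exists
  have hft : ε < f t := hc ⟨(le_max_right a c).trans_lt ht.1, ht.2⟩
  have htIoo : t ∈ Ioo a T := ⟨(le_max_left a c).trans_lt ht.1, ht.2⟩
  exact (hneg hft).not_ge (hd.nonneg_of_monotoneOn_Icc hmono htIoo)

lemma eventually_lt_sq_mul_comp_div {σ : ℝ → ℝ} (hσ_mono : MonotoneOn σ (Ici 0))
    (hσ_top : Tendsto σ atTop atTop) (M : ℝ) {ε : ℝ} (hε : 0 < ε) :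
    ∀ᶠ ν in 𝓝[>] 0, ∀ x, ε < x → M < x ^ 2 * σ (x / ν) := by
  have hlim : Tendsto (fun ν => σ (ε / ν)) (𝓝[>] 0) atTop := by
    simpa only [div_eq_mul_inv, Function.comp_def] using
      hσ_top.comp (tendsto_inv_nhdsGT_zero.const_mul_atTop hε)
  filter_upwards [hlim.eventually_gt_atTop (max M 0 / ε ^ 2), self_mem_nhdsWithin]
    with ν hσν hν x hx
  have hν : 0 < ν := hν
  have hεx : ε / ν ≤ x / ν := by gcongr
  have hσεx : σ (ε / ν) ≤ σ (x / ν) :=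
    hσ_mono (div_pos hε hν).le ((div_pos hε hν).le.trans hεx) hεx
  have hbig : max M 0 < ε ^ 2 * σ (ε / ν) := by
    rwa [div_lt_iff₀' (by positivity)] at hσν
  have hσε : 0 < σ (ε / ν) := pos_of_mul_pos_right ((le_max_right M 0).trans_lt hbig) (sq_nonneg ε)
  calc M ≤ max M 0 := le_max_left M 0
    _ < ε ^ 2 * σ (ε / ν) := hbig
    _ ≤ x ^ 2 * σ (x / ν) := by gcongr

theorem stmt0_general
    (σ : ℝ → ℝ)
    (hσ_mono : MonotoneOn σ (Set.Ici 0))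
    (hσ_top : Tendsto σ atTop atTop)
    (a T M : ℝ) (haT : a < T)
    (ζ ζ' : ℝ → ℝ → ℝ)
    (hζ_nonneg : ∀ ν, 0 < ν → ∀ t ∈ Set.Icc a T, 0 ≤ ζ ν t)
    (hζ_mono : ∀ ν, 0 < ν → MonotoneOn (ζ ν) (Set.Icc a T))
    (hζ_cont : ∀ ν, 0 < ν → ContinuousOn (ζ ν) (Set.Icc a T))
    (hζ_deriv : ∀ ν, 0 < ν →
      ∀ᵐ t ∂(volume.restrict (Set.Icc a T)),
        HasDerivAt (ζ ν) (ζ' ν t) t ∧ ζ' ν t ≤ M - (ζ ν t) ^ 2 * σ (ζ ν t / ν)) :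
    Filter.limsup (fun ν => ζ ν T) (nhdsWithin 0 (Set.Ioi (0:ℝ))) = 0 := by
  have hT : T ∈ Icc a T := right_mem_Icc.2 haT.le
  refine (tendsto_order.2 ⟨fun b hb => ?_, fun ε hε => ?_⟩).limsup_eq
  · filter_upwards [self_mem_nhdsWithin] with ν hν
    exact hb.trans_le (hζ_nonneg ν hν T hT)
  · filter_upwards [self_mem_nhdsWithin,
      eventually_lt_sq_mul_comp_div hσ_mono hσ_top M (half_pos hε)] with ν hν hσν
    have hle : ζ ν T ≤ ε / 2 :=
      (hζ_mono ν hν).le_of_ae_deriv_neg_above haT (hζ_cont ν hν T hT) <|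
        (hζ_deriv ν hν).mono fun t ht => ⟨ht.1, fun hx => by linarith [ht.2, hσν _ hx]⟩
    linarith

/-- Let σ : [0,∞) → [0,∞) be continuous, monotone increasing with σ(z) → ∞,
let 0 ≤ a < T and M > 0. If {ζ_ν}_{ν>0} is a family of monotone increasing nonnegative
W^{1,1}([a,T]) functions satisfying ζ_ν' ≤ M − ζ_ν² σ(ζ_ν/ν) a.e., then
limsup_{ν→0⁺} ζ_ν(T) = 0. -/
theorem stmt0
    (σ : ℝ → ℝ)
    (hσ_nonneg : ∀ z, 0 ≤ z → 0 ≤ σ z)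
    (hσ_cont : ContinuousOn σ (Set.Ici 0))
    (hσ_mono : MonotoneOn σ (Set.Ici 0))
    (hσ_top : Tendsto σ atTop atTop)
    (a T M : ℝ) (ha : 0 ≤ a) (haT : a < T) (hM : 0 < M)
    (ζ ζ' : ℝ → ℝ → ℝ)
    (hζ_nonneg : ∀ ν, 0 < ν → ∀ t ∈ Set.Icc a T, 0 ≤ ζ ν t)
    (hζ_mono : ∀ ν, 0 < ν → MonotoneOn (ζ ν) (Set.Icc a T))
    (hζ_cont : ∀ ν, 0 < ν → ContinuousOn (ζ ν) (Set.Icc a T))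
    (hζ'_int : ∀ ν, 0 < ν → IntegrableOn (ζ' ν) (Set.Icc a T))
    (hζ_deriv : ∀ ν, 0 < ν →
      ∀ᵐ t ∂(volume.restrict (Set.Icc a T)),
        HasDerivAt (ζ ν) (ζ' ν t) t ∧ ζ' ν t ≤ M - (ζ ν t) ^ 2 * σ (ζ ν t / ν)) :
    Filter.limsup (fun ν => ζ ν T) (nhdsWithin 0 (Set.Ioi (0:ℝ))) = 0 :=
  stmt0_general σ hσ_mono hσ_top a T M haT ζ ζ' hζ_nonneg hζ_mono hζ_cont hζ_deriv
end

section
/- Let u, (u^ν) ⊂ L²((0,T); L²(𝕋²)) with u^ν ⇀ u weakly, and suppose for each ν and all τ ∈ [0,T] the energy inequality ‖u^ν(τ)‖²_{L²} ≤ ‖u₀^ν‖²_{L²} + 2∫₀^τ ⟨f^ν, u^ν⟩_{L²} ds holds, where u₀^ν → u₀ strongly in L², f^ν → f strongly in L²_t L²_x, and u satisfies the energy balance ‖u(t)‖²_{L²} = ‖u₀‖²_{L²} + 2∫₀ᵗ ⟨f, u⟩_{L²} dτ for a.e. t. Then u^ν → u strongly in L²((0,T); L²(𝕋²)). -/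
/-! Work in the Hilbert space `L²((0,T); L²)`. Integrating the energy inequality over
`τ ∈ (0,T]` and exchanging the order of integration gives
`‖uᵛ‖² ≤ T ‖u₀ᵛ‖² + 2 ⟪(T - s) fᵛ, uᵛ⟫`, and the energy balance gives the same identity with
equality for `u`. A weakly convergent sequence is bounded (Banach–Steinhaus), so its pairing
with the strongly convergent `(T - s) fᵛ` converges; hence `limsup ‖uᵛ‖² ≤ ‖u‖²`, and expanding
`‖uᵛ - u‖² = ‖uᵛ‖² - 2 ⟪uᵛ, u⟫ + ‖u‖²` gives strong convergence. -/

open MeasureTheory Filter Set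

open scoped RealInnerProductSpace

noncomputable section

instance : Fact (0 < 2 * Real.pi) := ⟨by positivity⟩

/-- The flat two-dimensional torus 𝕋². -/
abbrev Torus : Type := AddCircle (2 * Real.pi) × AddCircle (2 * Real.pi)

/-- The Hilbert space L²(𝕋²). -/
abbrev L2T : Type := MeasureTheory.Lp ℝ 2 (volume : Measure Torus)

open Topology

theorem tendsto_iff_norm_sub_sq_tendsto_zero {E : Type*} [SeminormedAddCommGroup E] {x : ℕ → E}
    {x' : E} :
    Tendsto x atTop (𝓝 x') ↔ Tendsto (fun n => ‖x n - x'‖ ^ 2) atTop (𝓝 0) := by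
  rw [tendsto_iff_norm_sub_tendsto_zero]
  refine ⟨fun h => by simpa using h.pow 2, fun h => by simpa using h.sqrt⟩

section WeakConvergence

variable {H : Type*} [NormedAddCommGroup H] [InnerProductSpace ℝ H]

theorem exists_forall_norm_le_of_tendsto_inner [CompleteSpace H] {x : ℕ → H} {x' : H}
    (hx : ∀ y, Tendsto (fun n => ⟪x n, y⟫) atTop (𝓝 ⟪x', y⟫)) : ∃ C, ∀ n, ‖x n‖ ≤ C := by
  obtain ⟨C, hC⟩ := banach_steinhaus (g := fun n => innerSL ℝ (x n)) fun y => by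
    obtain ⟨C, hC⟩ := (hx y).norm.bddAbove_range
    exact ⟨C, fun n => hC ⟨n, rfl⟩⟩
  exact ⟨C, fun n => by simpa only [innerSL_apply_norm] using hC n⟩

theorem tendsto_inner_of_tendsto_of_tendsto_inner [CompleteSpace H] {x z : ℕ → H} {x' z' : H}
    (hx : ∀ y, Tendsto (fun n => ⟪x n, y⟫) atTop (𝓝 ⟪x', y⟫)) (hz : Tendsto z atTop (𝓝 z')) :
    Tendsto (fun n => ⟪z n, x n⟫) atTop (𝓝 ⟪z', x'⟫) := by
  obtain ⟨C, hC⟩ := exists_forall_norm_le_of_tendsto_inner hx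
  have hsmall : Tendsto (fun n => ⟪z n - z', x n⟫) atTop (𝓝 0) := by
    refine squeeze_zero_norm (fun n => (norm_inner_le_norm _ _).trans
      (mul_le_mul_of_nonneg_left (hC n) (norm_nonneg _))) ?_
    simpa using (tendsto_iff_norm_sub_tendsto_zero.1 hz).mul_const C
  have hfixed : Tendsto (fun n => ⟪z', x n⟫) atTop (𝓝 ⟪z', x'⟫) := by
    simpa only [real_inner_comm z'] using hx z'
  simpa [inner_sub_left] using hsmall.add hfixed

theorem tendsto_of_tendsto_inner_of_norm_sq_le {x : ℕ → H} {x' : H} {b : ℕ → ℝ}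
    (hx : ∀ y, Tendsto (fun n => ⟪x n, y⟫) atTop (𝓝 ⟪x', y⟫))
    (hb : Tendsto b atTop (𝓝 (‖x'‖ ^ 2))) (hle : ∀ n, ‖x n‖ ^ 2 ≤ b n) :
    Tendsto x atTop (𝓝 x') := by
  rw [tendsto_iff_norm_sub_sq_tendsto_zero]
  have hupper : Tendsto (fun n => b n - 2 * ⟪x n, x'⟫ + ‖x'‖ ^ 2) atTop (𝓝 0) := by
    convert (hb.sub ((hx x').const_mul 2)).add_const (‖x'‖ ^ 2) using 2
    rw [real_inner_self_eq_norm_sq]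
    ring
  refine squeeze_zero (fun n => by positivity) (fun n => ?_) hupper
  rw [norm_sub_sq_real]
  linarith [hle n]

theorem tendsto_of_tendsto_inner_of_energy [CompleteSpace H] {x z : ℕ → H} {x' z' : H}
    {a : ℕ → ℝ} {a' : ℝ} (hx : ∀ y, Tendsto (fun n => ⟪x n, y⟫) atTop (𝓝 ⟪x', y⟫))
    (hz : Tendsto z atTop (𝓝 z')) (ha : Tendsto a atTop (𝓝 a'))
    (hle : ∀ n, ‖x n‖ ^ 2 ≤ a n + 2 * ⟪z n, x n⟫) (heq : ‖x'‖ ^ 2 = a' + 2 * ⟪z', x'⟫) :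
    Tendsto x atTop (𝓝 x') :=
  tendsto_of_tendsto_inner_of_norm_sq_le hx
    (heq ▸ ha.add ((tendsto_inner_of_tendsto_of_tendsto_inner hx hz).const_mul 2)) hle

end WeakConvergence

namespace MeasureTheory

section L2

variable {α E : Type*} [MeasurableSpace α] {μ : Measure α} [NormedAddCommGroup E]
  [InnerProductSpace ℝ E]

theorem MemLp.inner_toLp_eq_integral {f : α → E} (hf : MemLp f 2 μ) (y : Lp E 2 μ) :
    ⟪hf.toLp f, y⟫ = ∫ a, ⟪f a, y a⟫ ∂μ := by
  rw [L2.inner_def]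
  exact integral_congr_ae (hf.coeFn_toLp.mono fun a ha => by simp only [ha])

theorem MemLp.inner_toLp_toLp {f g : α → E} (hf : MemLp f 2 μ) (hg : MemLp g 2 μ) :
    ⟪hf.toLp f, hg.toLp g⟫ = ∫ a, ⟪f a, g a⟫ ∂μ := by
  rw [hf.inner_toLp_eq_integral]
  exact integral_congr_ae (hg.coeFn_toLp.mono fun a ha => by simp only [ha])

theorem MemLp.norm_toLp_sq {f : α → E} (hf : MemLp f 2 μ) :
    ‖hf.toLp f‖ ^ 2 = ∫ a, ‖f a‖ ^ 2 ∂μ := by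
  simp only [← real_inner_self_eq_norm_sq, hf.inner_toLp_toLp hf]

theorem MemLp.integrable_inner {f g : α → E} (hf : MemLp f 2 μ) (hg : MemLp g 2 μ) :
    Integrable (fun a => ⟪f a, g a⟫) μ :=
  (L2.integrable_inner (hf.toLp f) (hg.toLp g)).congr <|
    hf.coeFn_toLp.mp <| hg.coeFn_toLp.mono fun a hga hfa => by simp only [hfa, hga]

theorem MemLp.tendsto_toLp {f : ℕ → α → E} {g : α → E} (hf : ∀ n, MemLp (f n) 2 μ)
    (hg : MemLp g 2 μ) (h : Tendsto (fun n => ∫ a, ‖f n a - g a‖ ^ 2 ∂μ) atTop (𝓝 0)) :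
    Tendsto (fun n => (hf n).toLp (f n)) atTop (𝓝 (hg.toLp g)) := by
  refine tendsto_iff_norm_sub_sq_tendsto_zero.2 (h.congr fun n => ?_)
  rw [← MemLp.toLp_sub, MemLp.norm_toLp_sq]
  rfl

end L2

section Interval

variable {E : Type*} [NormedAddCommGroup E] [InnerProductSpace ℝ E] {T : ℝ}

theorem MemLp.const_sub_smul {p : ENNReal} {g : ℝ → E}
    (hg : MemLp g p (volume.restrict (Ioc 0 T))) :
    MemLp (fun s => (T - s) • g s) p (volume.restrict (Ioc 0 T)) := by
  refine hg.of_le_mul (c := T)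
    ((continuous_const.sub continuous_id).aestronglyMeasurable.smul hg.1) ?_
  filter_upwards [ae_restrict_mem measurableSet_Ioc] with s hs
  rw [norm_smul, Real.norm_of_nonneg (by linarith [hs.2])]
  gcongr
  linarith [hs.1]

theorem tendsto_toLp_const_sub_smul {f : ℕ → ℝ → E} {g : ℝ → E}
    (hf : ∀ n, MemLp (f n) 2 (volume.restrict (Ioc 0 T)))
    (hg : MemLp g 2 (volume.restrict (Ioc 0 T)))
    (h : Tendsto (fun n => (hf n).toLp (f n)) atTop (𝓝 (hg.toLp g))) :
    Tendsto (fun n => (hf n).const_sub_smul.toLp (fun s => (T - s) • f n s)) atTop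
      (𝓝 (hg.const_sub_smul.toLp (fun s => (T - s) • g s))) := by
  rw [tendsto_iff_norm_sub_tendsto_zero] at h ⊢
  refine squeeze_zero (fun n => norm_nonneg _) (fun n => ?_) (by simpa using h.const_mul T)
  refine Lp.norm_le_mul_norm_of_ae_le_mul ?_
  filter_upwards [Lp.coeFn_sub ((hf n).const_sub_smul.toLp _) (hg.const_sub_smul.toLp _),
    Lp.coeFn_sub ((hf n).toLp _) (hg.toLp _), (hf n).coeFn_toLp, hg.coeFn_toLp,
    (hf n).const_sub_smul.coeFn_toLp, hg.const_sub_smul.coeFn_toLp,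
    ae_restrict_mem measurableSet_Ioc] with s h1 h2 h3 h4 h5 h6 hs
  rw [h1, h2, Pi.sub_apply, Pi.sub_apply, h3, h4, h5, h6, ← smul_sub, norm_smul,
    Real.norm_of_nonneg (by linarith [hs.2])]
  gcongr
  linarith [hs.1]

end Interval

end MeasureTheory

section Primitive

variable {T : ℝ} {g : ℝ → ℝ}

theorem integrableOn_Ioc_primitive (hg : IntegrableOn g (Ioc 0 T)) :
    IntegrableOn (fun τ => ∫ s in Ioc 0 τ, g s) (Ioc 0 T) :=
  (intervalIntegral.continuousOn_primitive (a := 0) (b := T)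
    ((integrableOn_Icc_iff_integrableOn_Ioc (by simp)).2 hg)).integrableOn_Icc.mono_set
    Ioc_subset_Icc_self

theorem integral_Ioc_primitive (hg : IntegrableOn g (Ioc 0 T)) :
    ∫ τ in Ioc 0 T, ∫ s in Ioc 0 τ, g s = ∫ s in Ioc 0 T, (T - s) * g s := by
  set μ := volume.restrict (Ioc (0 : ℝ) T)
  have : IsFiniteMeasure μ := isFiniteMeasure_restrict.2 measure_Ioc_lt_top.ne
  let F : ℝ → ℝ → ℝ := fun τ s => (Iic τ).indicator g s
  have hF : Integrable (Function.uncurry F) (μ.prod μ) := by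
    have hdiag : MeasurableSet {q : ℝ × ℝ | q.2 ≤ q.1} :=
      measurableSet_le measurable_snd measurable_fst
    refine ((hg.comp_snd μ).indicator hdiag).congr (ae_of_all _ fun q => ?_)
    simp [F, indicator, Function.uncurry_def]
  calc ∫ τ in Ioc 0 T, ∫ s in Ioc 0 τ, g s = ∫ τ, ∫ s, F τ s ∂μ ∂μ :=
        setIntegral_congr_fun measurableSet_Ioc fun τ hτ => by
          rw [setIntegral_indicator measurableSet_Iic, Ioc_inter_Iic, min_eq_right hτ.2]
    _ = ∫ s, ∫ τ, F τ s ∂μ ∂μ := integral_integral_swap hF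
    _ = ∫ s in Ioc 0 T, (T - s) * g s :=
        setIntegral_congr_fun measurableSet_Ioc fun s hs => by
          have hF_s : (fun τ => F τ s) = (Ici s).indicator fun _ => g s := by
            ext τ
            simp [F, indicator]
          have hslice : Ioc 0 T ∩ Ici s = Icc s T := Set.ext fun τ =>
            ⟨fun ⟨⟨_, hτT⟩, hsτ⟩ => ⟨hsτ, hτT⟩, fun ⟨hsτ, hτT⟩ => ⟨⟨hs.1.trans_le hsτ, hτT⟩, hsτ⟩⟩
          rw [hF_s, setIntegral_indicator measurableSet_Ici, setIntegral_const, smul_eq_mul,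
            hslice, Real.volume_real_Icc_of_le hs.2]

theorem integral_Ioc_const_add_two_mul_primitive (hT : 0 ≤ T) (c : ℝ)
    (hg : IntegrableOn g (Ioc 0 T)) :
    ∫ τ in Ioc 0 T, (c + 2 * ∫ s in Ioc 0 τ, g s) = T * c + 2 * ∫ s in Ioc 0 T, (T - s) * g s := by
  rw [integral_add (integrableOn_const measure_Ioc_lt_top.ne :
        IntegrableOn (fun _ => c) (Ioc 0 T) volume)
      ((integrableOn_Ioc_primitive hg).const_mul 2 :
        IntegrableOn (fun τ => 2 * ∫ s in Ioc 0 τ, g s) (Ioc 0 T) volume), integral_const_mul,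
    integral_Ioc_primitive hg, setIntegral_const, Real.volume_real_Ioc_of_le hT, sub_zero,
    smul_eq_mul]

end Primitive

section Energy

variable {E : Type*} [NormedAddCommGroup E] [InnerProductSpace ℝ E] {T : ℝ} {v f : ℝ → E}

theorem integral_energy_rhs_eq (hT : 0 ≤ T) (c : ℝ) (hv : MemLp v 2 (volume.restrict (Ioc 0 T)))
    (hf : MemLp f 2 (volume.restrict (Ioc 0 T))) :
    ∫ τ in Ioc 0 T, (c + 2 * ∫ s in Ioc 0 τ, ⟪f s, v s⟫) =
      T * c + 2 * ⟪hf.const_sub_smul.toLp (fun s => (T - s) • f s), hv.toLp v⟫ := by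
  simp only [integral_Ioc_const_add_two_mul_primitive hT c (hf.integrable_inner hv),
    MemLp.inner_toLp_toLp, real_inner_smul_left]

theorem norm_toLp_sq_le_of_energy_le (hT : 0 ≤ T) {c : ℝ}
    (hv : MemLp v 2 (volume.restrict (Ioc 0 T))) (hf : MemLp f 2 (volume.restrict (Ioc 0 T)))
    (h : ∀ τ ∈ Ioc 0 T, ‖v τ‖ ^ 2 ≤ c + 2 * ∫ s in Ioc 0 τ, ⟪f s, v s⟫) :
    ‖hv.toLp v‖ ^ 2 ≤ T * c + 2 * ⟪hf.const_sub_smul.toLp (fun s => (T - s) • f s), hv.toLp v⟫ := by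
  rw [hv.norm_toLp_sq, ← integral_energy_rhs_eq hT c hv hf]
  exact setIntegral_mono_on ((memLp_two_iff_integrable_sq_norm hv.1).1 hv)
    ((integrableOn_const measure_Ioc_lt_top.ne).add
      ((integrableOn_Ioc_primitive (hf.integrable_inner hv)).const_mul 2)) measurableSet_Ioc h

theorem norm_toLp_sq_eq_of_energy_eq (hT : 0 ≤ T) {c : ℝ}
    (hv : MemLp v 2 (volume.restrict (Ioc 0 T))) (hf : MemLp f 2 (volume.restrict (Ioc 0 T)))
    (h : ∀ᵐ τ ∂(volume.restrict (Ioc 0 T)), ‖v τ‖ ^ 2 = c + 2 * ∫ s in Ioc 0 τ, ⟪f s, v s⟫) :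
    ‖hv.toLp v‖ ^ 2 = T * c + 2 * ⟪hf.const_sub_smul.toLp (fun s => (T - s) • f s), hv.toLp v⟫ := by
  rw [hv.norm_toLp_sq, ← integral_energy_rhs_eq hT c hv hf]
  exact integral_congr_ae h

end Energy

/-- energy balance ⟹ strong convergence: let u^ν ⇀ u weakly in
L²((0,T);L²(𝕋²)), each u^ν satisfying the viscous energy inequality, with
u₀^ν → u₀ strongly in L², f^ν → f strongly in L²_tL²_x, and u energy balanced.
Then u^ν → u strongly in L²((0,T);L²(𝕋²)). -/
theorem stmt7 (T : ℝ) (hT : 0 < T)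
    (u : ℕ → ℝ → L2T) (U : ℝ → L2T)
    (u0 : ℕ → L2T) (u0lim : L2T)
    (f : ℕ → ℝ → L2T) (flim : ℝ → L2T)
    -- u^ν, u ∈ L²((0,T);L²)
    (hu_meas : ∀ n, AEStronglyMeasurable (u n) (volume.restrict (Set.Ioc 0 T)))
    (hU_meas : AEStronglyMeasurable U (volume.restrict (Set.Ioc 0 T)))
    (hu_L2 : ∀ n, IntegrableOn (fun t => ‖u n t‖ ^ 2) (Set.Ioc 0 T))
    (hU_L2 : IntegrableOn (fun t => ‖U t‖ ^ 2) (Set.Ioc 0 T))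
    -- f^ν, f ∈ L²((0,T);L²)
    (hf_meas : ∀ n, AEStronglyMeasurable (f n) (volume.restrict (Set.Ioc 0 T)))
    (hflim_meas : AEStronglyMeasurable flim (volume.restrict (Set.Ioc 0 T)))
    (hf_L2 : ∀ n, IntegrableOn (fun t => ‖f n t‖ ^ 2) (Set.Ioc 0 T))
    (hflim_L2 : IntegrableOn (fun t => ‖flim t‖ ^ 2) (Set.Ioc 0 T))
    -- u^ν ⇀ u weakly in L²((0,T);L²(𝕋²))
    (hweak : ∀ v : ℝ → L2T, AEStronglyMeasurable v (volume.restrict (Set.Ioc 0 T)) →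
      IntegrableOn (fun t => ‖v t‖ ^ 2) (Set.Ioc 0 T) →
      Tendsto (fun n => ∫ t in Set.Ioc (0:ℝ) T, ⟪u n t, v t⟫) atTop
        (nhds (∫ t in Set.Ioc (0:ℝ) T, ⟪U t, v t⟫)))
    -- energy inequality for the physical realization, for all 0 ≤ τ ≤ T
    (henergy : ∀ n, ∀ τ ∈ Set.Icc (0:ℝ) T,
      ‖u n τ‖ ^ 2 ≤ ‖u0 n‖ ^ 2 + 2 * ∫ s in Set.Ioc (0:ℝ) τ, ⟪f n s, u n s⟫)
    -- u₀^ν → u₀ strongly in L²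
    (hu0 : Tendsto (fun n => ‖u0 n - u0lim‖) atTop (nhds 0))
    -- f^ν → f strongly in L²_t L²_x
    (hf : Tendsto (fun n => ∫ t in Set.Ioc (0:ℝ) T, ‖f n t - flim t‖ ^ 2) atTop (nhds 0))
    -- u is energy balanced (for a.e. t)
    (hbal : ∀ᵐ t ∂(volume.restrict (Set.Ioc (0:ℝ) T)),
      ‖U t‖ ^ 2 = ‖u0lim‖ ^ 2 + 2 * ∫ s in Set.Ioc (0:ℝ) t, ⟪flim s, U s⟫) :
    Tendsto (fun n => ∫ t in Set.Ioc (0:ℝ) T, ‖u n t - U t‖ ^ 2) atTop (nhds 0) := by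
  have hu n := (memLp_two_iff_integrable_sq_norm (hu_meas n)).2 (hu_L2 n)
  have hU := (memLp_two_iff_integrable_sq_norm hU_meas).2 hU_L2
  have hfn n := (memLp_two_iff_integrable_sq_norm (hf_meas n)).2 (hf_L2 n)
  have hflim := (memLp_two_iff_integrable_sq_norm hflim_meas).2 hflim_L2
  have hweak_Lp (y : Lp L2T 2 (volume.restrict (Ioc 0 T))) :
      Tendsto (fun n => ⟪(hu n).toLp (u n), y⟫) atTop (𝓝 ⟪hU.toLp U, y⟫) := by
    simpa only [MemLp.inner_toLp_eq_integral] using hweak y (Lp.aestronglyMeasurable y)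
      ((memLp_two_iff_integrable_sq_norm (Lp.aestronglyMeasurable y)).1 (Lp.memLp y))
  have hdata : Tendsto (fun n => T * ‖u0 n‖ ^ 2) atTop (𝓝 (T * ‖u0lim‖ ^ 2)) :=
    ((tendsto_iff_norm_sub_tendsto_zero.2 hu0).norm.pow 2).const_mul T
  have hforce := tendsto_toLp_const_sub_smul hfn hflim (MemLp.tendsto_toLp hfn hflim hf)
  have hstrong := tendsto_of_tendsto_inner_of_energy hweak_Lp hforce hdata
    (fun n => norm_toLp_sq_le_of_energy_le hT.le (hu n) (hfn n) fun τ hτ =>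
      henergy n τ (Ioc_subset_Icc_self hτ))
    (norm_toLp_sq_eq_of_energy_eq hT.le hU hflim hbal)
  refine (tendsto_iff_norm_sub_sq_tendsto_zero.1 hstrong).congr fun n => ?_
  rw [← MemLp.toLp_sub, MemLp.norm_toLp_sq]
  rfl
end
end

section
/- Fix 1 ≤ q < 2 and δ ∈ (0, |𝕋²|). Let g : (0,|𝕋²|] → [0,∞) be monotonically increasing with ∫₀^{|𝕋²|} g(s)^q ds/s =: A^q < ∞. Then ∫₀^δ g(s)² ds/s ≤ A² / (log(|𝕋²|/δ))^{(2−q)/q}. -/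
/-!
On `(0, δ]` monotonicity gives `g ≤ g δ`, so `∫₀^δ g^p ds/s ≤ g(δ)^{p-q} ∫₀^δ g^q ds/s`; on
`(δ, T]` it gives `g ≥ g δ`, so `g(δ)^q log(T/δ) ≤ ∫_δ^T g^q ds/s`. Both pieces of `A^q` are
nonnegative, hence `g(δ) ≤ (A^q / log(T/δ))^{1/q}` and `∫₀^δ g^q ds/s ≤ A^q`, which combine
to the bound.
-/

open MeasureTheory Set Real

section

variable {g : ℝ → ℝ} {S : Set ℝ} {c δ T p q A : ℝ}

lemma setIntegral_rpow_div_le_rpow_mul (hS : S ⊆ Ioi 0) (hSm : MeasurableSet S)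
    (hg0 : ∀ s ∈ S, 0 ≤ g s) (hgc : ∀ s ∈ S, g s ≤ c) (hc : 0 ≤ c) (hq : 0 ≤ q) (hqp : q ≤ p)
    (hint : IntegrableOn (fun s => g s ^ q / s) S) :
    ∫ s in S, g s ^ p / s ≤ c ^ (p - q) * ∫ s in S, g s ^ q / s := by
  by_cases hintp : IntegrableOn (fun s => g s ^ p / s) S
  · rw [← integral_const_mul]
    refine setIntegral_mono_on hintp (hint.const_mul _) hSm fun s hs => ?_
    have hs0 : (0 : ℝ) < s := hS hs
    calc g s ^ p / s = g s ^ (p - q) * (g s ^ q / s) := by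
          rw [← mul_div_assoc, ← rpow_add_of_nonneg (hg0 s hs) (sub_nonneg.2 hqp) hq,
            sub_add_cancel]
      _ ≤ c ^ (p - q) * (g s ^ q / s) :=
          mul_le_mul_of_nonneg_right (rpow_le_rpow (hg0 s hs) (hgc s hs) (sub_nonneg.2 hqp))
            (div_nonneg (rpow_nonneg (hg0 s hs) q) hs0.le)
  · rw [integral_undef hintp]
    exact mul_nonneg (rpow_nonneg hc _)
      (setIntegral_nonneg hSm fun s hs => div_nonneg (rpow_nonneg (hg0 s hs) q) (hS hs).le)

lemma rpow_mul_log_le_setIntegral_Ioc (hδ : 0 < δ) (hδT : δ ≤ T) (hg0 : 0 ≤ g δ)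
    (hg : ∀ s ∈ Ioc δ T, g δ ≤ g s) (hq : 0 ≤ q)
    (hint : IntegrableOn (fun s => g s ^ q / s) (Ioc δ T)) :
    g δ ^ q * log (T / δ) ≤ ∫ s in Ioc δ T, g s ^ q / s := by
  have h0 : (0 : ℝ) ∉ uIcc δ T := by
    rw [uIcc_of_le hδT]
    exact fun h => absurd h.1 (not_le.mpr hδ)
  have hconst : ∫ s in Ioc δ T, g δ ^ q / s = g δ ^ q * log (T / δ) := by
    simp_rw [← intervalIntegral.integral_of_le hδT, div_eq_mul_inv (g δ ^ q),
      intervalIntegral.integral_const_mul, integral_inv h0]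
  have hconst_int : IntegrableOn (fun s : ℝ => g δ ^ q / s) (Ioc δ T) :=
    ((continuousOn_const.div continuousOn_id fun s hs => (hδ.trans_le hs.1).ne').integrableOn_Icc
      ).mono_set Ioc_subset_Icc_self
  rw [← hconst]
  refine setIntegral_mono_on hconst_int hint measurableSet_Ioc fun s hs => ?_
  gcongr
  · exact (hδ.trans hs.1).le
  · exact hg s hs

lemma rpow_sub_mul_le_div_rpow {I L : ℝ} (hq : 0 < q) (hqp : q ≤ p) (hA : 0 ≤ A) (hc : 0 ≤ c)
    (hL : 0 < L) (hI0 : 0 ≤ I) (hcL : c ^ q * L ≤ A ^ q) (hI : I ≤ A ^ q) :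
    c ^ (p - q) * I ≤ A ^ p / L ^ ((p - q) / q) := by
  have hexp : q * ((p - q) / q) = p - q := by field_simp
  have hc' : c ^ (p - q) ≤ A ^ (p - q) / L ^ ((p - q) / q) := by
    have h := rpow_le_rpow (rpow_nonneg hc q) ((le_div_iff₀ hL).mpr hcL)
      (div_nonneg (sub_nonneg.2 hqp) hq.le)
    rwa [← rpow_mul hc, hexp, div_rpow (rpow_nonneg hA q) hL.le, ← rpow_mul hA, hexp] at h
  calc c ^ (p - q) * I ≤ A ^ (p - q) / L ^ ((p - q) / q) * A ^ q :=
        mul_le_mul hc' hI hI0 (by positivity)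
    _ = A ^ p / L ^ ((p - q) / q) := by
        rw [div_mul_eq_mul_div, ← rpow_add_of_nonneg hA (sub_nonneg.2 hqp) hq.le, sub_add_cancel]

theorem setIntegral_Ioc_rpow_div_le_div_log_rpow (hq : 0 < q) (hqp : q ≤ p) (hδ : 0 < δ)
    (hδT : δ < T) (hg0 : ∀ s ∈ Ioc 0 T, 0 ≤ g s) (hg : MonotoneOn g (Ioc 0 T)) (hA : 0 ≤ A)
    (hint : IntegrableOn (fun s => g s ^ q / s) (Ioc 0 T))
    (hAq : ∫ s in Ioc 0 T, g s ^ q / s = A ^ q) :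
    ∫ s in Ioc 0 δ, g s ^ p / s ≤ A ^ p / log (T / δ) ^ ((p - q) / q) := by
  have hδmem : δ ∈ Ioc 0 T := ⟨hδ, hδT.le⟩
  have hlow : Ioc 0 δ ⊆ Ioc 0 T := Ioc_subset_Ioc_right hδT.le
  have hhigh : Ioc δ T ⊆ Ioc 0 T := Ioc_subset_Ioc_left hδ.le
  have hsplit : (∫ s in Ioc 0 δ, g s ^ q / s) + ∫ s in Ioc δ T, g s ^ q / s = A ^ q := by
    rw [← hAq, ← setIntegral_union (Ioc_disjoint_Ioc_of_le le_rfl) measurableSet_Ioc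
      (hint.mono_set hlow) (hint.mono_set hhigh), Ioc_union_Ioc_eq_Ioc hδ.le hδT.le]
  have hnonneg {a b : ℝ} (h : Ioc a b ⊆ Ioc 0 T) : 0 ≤ ∫ s in Ioc a b, g s ^ q / s :=
    setIntegral_nonneg measurableSet_Ioc fun s hs =>
      div_nonneg (rpow_nonneg (hg0 s (h hs)) q) (h hs).1.le
  have hlog := rpow_mul_log_le_setIntegral_Ioc hδ hδT.le (hg0 δ hδmem)
    (fun s hs => hg hδmem (hhigh hs) hs.1.le) hq.le (hint.mono_set hhigh)
  calc ∫ s in Ioc 0 δ, g s ^ p / s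
      ≤ g δ ^ (p - q) * ∫ s in Ioc 0 δ, g s ^ q / s :=
        setIntegral_rpow_div_le_rpow_mul (fun s hs => hs.1) measurableSet_Ioc
          (fun s hs => hg0 s (hlow hs)) (fun s hs => hg (hlow hs) hδmem hs.2) (hg0 δ hδmem)
          hq.le hqp (hint.mono_set hlow)
    _ ≤ A ^ p / log (T / δ) ^ ((p - q) / q) :=
        rpow_sub_mul_le_div_rpow hq hqp hA (hg0 δ hδmem)
          (log_pos ((one_lt_div hδ).mpr hδT)) (hnonneg hlow)
          (by linarith [hnonneg hlow]) (by linarith [hnonneg hhigh])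

end

/-- fix 1 ≤ q < 2 and δ ∈ (0, |𝕋²|) (with |𝕋²| = (2π)²). If
g : (0,|𝕋²|] → [0,∞) is monotone increasing with ∫₀^{|𝕋²|} g(s)^q ds/s = A^q < ∞, then
∫₀^δ g(s)² ds/s ≤ A² / (log(|𝕋²|/δ))^{(2−q)/q}. -/
theorem stmt9 (q : ℝ) (hq1 : 1 ≤ q) (hq2 : q < 2)
    (δ : ℝ) (hδ : δ ∈ Set.Ioo (0:ℝ) ((2 * Real.pi) ^ 2))
    (g : ℝ → ℝ)
    (hg_nonneg : ∀ s ∈ Set.Ioc (0:ℝ) ((2 * Real.pi) ^ 2), 0 ≤ g s)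
    (hg_mono : MonotoneOn g (Set.Ioc (0:ℝ) ((2 * Real.pi) ^ 2)))
    (A : ℝ) (hA : 0 ≤ A)
    (hint : IntegrableOn (fun s => g s ^ q / s) (Set.Ioc (0:ℝ) ((2 * Real.pi) ^ 2)))
    (hAq : ∫ s in Set.Ioc (0:ℝ) ((2 * Real.pi) ^ 2), g s ^ q / s = A ^ q) :
    (∫ s in Set.Ioc (0:ℝ) δ, g s ^ (2:ℝ) / s) ≤
      A ^ (2:ℝ) / Real.log ((2 * Real.pi) ^ 2 / δ) ^ ((2 - q) / q) :=
  setIntegral_Ioc_rpow_div_le_div_log_rpow (by linarith) hq2.le hδ.1 hδ.2 hg_nonneg hg_mono hA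
    hint hAq
end

section
/- Let q ∈ [1,2) and suppose ω ∈ L^{(1,q)}(𝕋²), i.e., ‖ω‖_{L^{(1,q)}} = (∫₀^{|𝕋²|} M_s(ω)^q ds/s)^{1/q} < ∞. Then ω ∈ L^{(1,2)}(𝕋²) and moreover the tail integrals decay uniformly: ∫₀^δ M_s(ω)² ds/s ≤ ‖ω‖²_{L^{(1,q)}} / (log(|𝕋²|/δ))^{(2−q)/q} for all δ ∈ (0,|𝕋²|). -/
/-! `M_s(ω)` is nondecreasing in `s`: on the torus every measurable set can be enlarged to one of
any larger measure by adding a sublevel set `{θ₁ ≤ r}` of the first angle, whose measure depends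
Lipschitz-continuously on `r`. Monotonicity gives
`M_s^q log(|𝕋²|/s) ≤ ∫_s^{|𝕋²|} M_t^q dt/t ≤ ‖ω‖^q`, so `M_s^q ≤ ‖ω‖^q / log(|𝕋²|/δ)` for `s ≤ δ`;
writing `M_s² = (M_s^q)^{(2-q)/q} M_s^q` and integrating over `(0, δ]` gives the bound. -/

open MeasureTheory Filter Set

noncomputable section

/-- Rearrangement-invariant maximal function:
`Ms f s = sup { ∫_E |f| : E measurable, |E| = s }`. -/
def Ms (f : Torus → ℝ) (s : ℝ) : ℝ :=
  sSup {r : ℝ | ∃ E : Set Torus, MeasurableSet E ∧ volume E = ENNReal.ofReal s ∧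
    r = ∫ x in E, |f x|}

local notation "T" => 2 * Real.pi

theorem exists_superset_measureReal_eq {α : Type*} [MeasurableSpace α] (μ : Measure α)
    [IsFiniteMeasure μ] {φ : α → ℝ} (hφ : Measurable φ) {a c : ℝ} (hφ_mem : ∀ x, φ x ∈ Ioc a c)
    {K : NNReal} (hK : ∀ s t, s ≤ t → μ.real (φ ⁻¹' Ioc s t) ≤ K * (t - s))
    {E : Set α} (hE : MeasurableSet E) {v : ℝ} (hEv : μ.real E ≤ v) (hv : v ≤ μ.real univ) :
    ∃ E', E ⊆ E' ∧ MeasurableSet E' ∧ μ.real E' = v := by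
  set h : ℝ → ℝ := fun r => μ.real (E ∪ φ ⁻¹' Iic r) with h_def
  have h_mono : Monotone h := fun r r' hr =>
    measureReal_mono (union_subset_union_right _ (preimage_mono (Iic_subset_Iic.2 hr)))
  have h_lip : LipschitzWith K h := by
    refine LipschitzWith.of_le_add_mul K fun r r' => ?_
    rcases le_total r r' with hr | hr
    · exact (h_mono hr).trans (le_add_of_nonneg_right (by positivity))
    have h_sub : E ∪ φ ⁻¹' Iic r ⊆ (E ∪ φ ⁻¹' Iic r') ∪ φ ⁻¹' Ioc r' r :=
      fun x hx => by grind
    calc h r ≤ h r' + μ.real (φ ⁻¹' Ioc r' r) :=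
          (measureReal_mono h_sub).trans (measureReal_union_le _ _)
      _ ≤ h r' + K * dist r r' := by
          rw [Real.dist_eq, abs_of_nonneg (sub_nonneg.2 hr)]
          exact add_le_add_right (hK r' r hr) _
  have ha : h a = μ.real E := by
    have : φ ⁻¹' Iic a = ∅ := eq_empty_of_forall_notMem fun x hx => not_le.2 (hφ_mem x).1 hx
    simp [h_def, this]
  have hc : h c = μ.real univ := by
    have : φ ⁻¹' Iic c = univ := eq_univ_of_forall fun x => (hφ_mem x).2
    simp [h_def, this]
  obtain ⟨r, hr⟩ := intermediate_value_univ a c h_lip.continuous ⟨ha ▸ hEv, hc ▸ hv⟩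
  exact ⟨_, subset_union_left, hE.union (hφ measurableSet_Iic), hr⟩

def torusAngle (z : Torus) : ℝ := AddCircle.equivIoc T 0 z.1

lemma measurable_torusAngle : Measurable torusAngle :=
  measurable_subtype_coe.comp ((AddCircle.measurableEquivIoc T 0).measurable.comp measurable_fst)

lemma torusAngle_mem (z : Torus) : torusAngle z ∈ Ioc 0 T := by
  simpa [torusAngle] using (AddCircle.equivIoc T 0 z.1).2

lemma map_volume_torusAngle :
    volume.map torusAngle = ENNReal.ofReal T • volume.restrict (Ioc 0 (0 + T)) := by
  have h_equiv := AddCircle.measurePreserving_equivIoc (2 * Real.pi) (a := 0)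
  have h_circle : (volume : Measure (AddCircle T)).map (Subtype.val ∘ AddCircle.equivIoc T 0)
      = volume.restrict (Ioc 0 (0 + T)) := by
    rw [← map_comap_subtype_coe measurableSet_Ioc, ← h_equiv.map_eq,
      Measure.map_map measurable_subtype_coe h_equiv.measurable]
  rw [← h_circle, ← Measure.map_smul, ← AddCircle.measure_univ, ← Measure.map_fst_prod,
    Measure.map_map (measurable_subtype_coe.comp h_equiv.measurable) measurable_fst,
    ← Measure.volume_eq_prod]
  rfl

lemma measureReal_torusAngle_preimage_Ioc_le {s t : ℝ} (hst : s ≤ t) :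
    volume.real (torusAngle ⁻¹' Ioc s t) ≤ (Real.toNNReal T : ℝ) * (t - s) := by
  rw [measureReal_def, ← Measure.map_apply measurable_torusAngle measurableSet_Ioc,
    map_volume_torusAngle]
  calc _ ≤ (ENNReal.ofReal T * ENNReal.ofReal (t - s)).toReal := by
        refine ENNReal.toReal_mono (by finiteness) ?_
        rw [Measure.smul_apply, Measure.restrict_apply measurableSet_Ioc, smul_eq_mul]
        gcongr
        exact (measure_mono inter_subset_left).trans Real.volume_Ioc.le
    _ = _ := by
        rw [ENNReal.toReal_mul, ENNReal.toReal_ofReal (by positivity),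
          ENNReal.toReal_ofReal (sub_nonneg.2 hst), Real.coe_toNNReal _ (by positivity)]

lemma volume_univ_torus : volume (univ : Set Torus) = ENNReal.ofReal (T ^ 2) := by
  rw [← univ_prod_univ, Measure.volume_eq_prod, Measure.prod_prod, AddCircle.measure_univ,
    ← ENNReal.ofReal_mul (by positivity), sq]

lemma Ms_nonneg (f : Torus → ℝ) (s : ℝ) : 0 ≤ Ms f s := by
  apply Real.sSup_nonneg
  rintro r ⟨E, hE, -, rfl⟩
  exact setIntegral_nonneg hE fun x _ => abs_nonneg _

lemma bddAbove_Ms {f : Torus → ℝ} (hf : Integrable f) (s : ℝ) :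
    BddAbove {r : ℝ | ∃ E : Set Torus, MeasurableSet E ∧ volume E = ENNReal.ofReal s ∧
      r = ∫ x in E, |f x|} := by
  refine ⟨∫ x, |f x|, ?_⟩
  rintro r ⟨E, -, -, rfl⟩
  exact setIntegral_le_integral hf.abs (Eventually.of_forall fun x => abs_nonneg _)

lemma monotoneOn_Ms {f : Torus → ℝ} (hf : Integrable f) : MonotoneOn (Ms f) (Icc 0 (T ^ 2)) := by
  rintro s ⟨hs0, -⟩ s' ⟨-, hs'⟩ hss'
  refine Real.sSup_le ?_ (Ms_nonneg f s')
  rintro r ⟨E, hE, hvol, rfl⟩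
  have hEs : volume.real E = s := by rw [measureReal_def, hvol, ENNReal.toReal_ofReal hs0]
  have huniv : volume.real (univ : Set Torus) = T ^ 2 := by
    rw [measureReal_def, volume_univ_torus, ENNReal.toReal_ofReal (by positivity)]
  obtain ⟨E', hEE', hE', hE's'⟩ := exists_superset_measureReal_eq volume measurable_torusAngle
    torusAngle_mem (fun _ _ => measureReal_torusAngle_preimage_Ioc_le) hE (hEs.trans_le hss')
    (huniv ▸ hs')
  refine le_csSup_of_le (bddAbove_Ms hf s') ⟨E', hE', by rw [← hE's', ofReal_measureReal], rfl⟩ ?_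
  exact setIntegral_mono_set hf.abs.integrableOn (Eventually.of_forall fun x => abs_nonneg _)
    hEE'.eventuallyLE

section MonotoneProfile

variable {M : ℝ → ℝ} {A p q : ℝ}

lemma integrableOn_rpow_div_of_monotoneOn (hM0 : ∀ s, 0 ≤ M s) (hM : MonotoneOn M (Ioc 0 A))
    (hq : 0 ≤ q) (hqp : q ≤ p) (hint : IntegrableOn (fun s => M s ^ q / s) (Ioc 0 A)) :
    IntegrableOn (fun s => M s ^ p / s) (Ioc 0 A) := by
  have h_meas : AEMeasurable M (volume.restrict (Ioc 0 A)) :=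
    aemeasurable_restrict_of_monotoneOn measurableSet_Ioc hM
  refine (hint.const_mul (M A ^ (p - q))).mono'
    ((h_meas.pow_const p).div aemeasurable_id).aestronglyMeasurable ?_
  filter_upwards [ae_restrict_mem measurableSet_Ioc] with s hs
  rw [Real.norm_of_nonneg (div_nonneg (Real.rpow_nonneg (hM0 s) p) hs.1.le)]
  calc M s ^ p / s = M s ^ (p - q) * (M s ^ q / s) := by
        rw [mul_div_assoc', ← Real.rpow_add_of_nonneg (hM0 s) (sub_nonneg.2 hqp) hq,
          sub_add_cancel]
    _ ≤ M A ^ (p - q) * (M s ^ q / s) := by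
        gcongr
        · exact div_nonneg (Real.rpow_nonneg (hM0 s) q) hs.1.le
        · exact hM0 s
        · exact hM hs ⟨hs.1.trans_le hs.2, le_rfl⟩ hs.2

lemma rpow_mul_log_le_setIntegral (hM0 : ∀ s, 0 ≤ M s) (hM : MonotoneOn M (Ioc 0 A))
    (hq : 0 ≤ q) (hint : IntegrableOn (fun s => M s ^ q / s) (Ioc 0 A)) {s : ℝ}
    (hs : s ∈ Ioc 0 A) : M s ^ q * Real.log (A / s) ≤ ∫ t in Ioc 0 A, M t ^ q / t := by
  have h_log : ∫ t in Ioc s A, M s ^ q / t = M s ^ q * Real.log (A / s) := by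
    rw [← integral_one_div (notMem_uIcc_of_lt hs.1 (hs.1.trans_le hs.2)),
      intervalIntegral.integral_of_le hs.2, ← integral_const_mul]
    simp only [mul_one_div]
  have h_const : IntegrableOn (fun t => M s ^ q / t) (Ioc s A) :=
    (continuousOn_const.div continuousOn_id fun t ht => (hs.1.trans_le ht.1).ne').integrableOn_Icc
      |>.mono_set Ioc_subset_Icc_self
  rw [← h_log]
  calc ∫ t in Ioc s A, M s ^ q / t ≤ ∫ t in Ioc s A, M t ^ q / t := by
        refine setIntegral_mono_on h_const (hint.mono_set (Ioc_subset_Ioc_left hs.1.le))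
          measurableSet_Ioc fun t ht => ?_
        have ht0 : 0 < t := hs.1.trans ht.1
        gcongr
        · exact hM0 s
        · exact hM hs ⟨ht0, ht.2⟩ ht.1.le
    _ ≤ ∫ t in Ioc 0 A, M t ^ q / t :=
        setIntegral_mono_set hint
          ((ae_restrict_iff' measurableSet_Ioc).2 (Eventually.of_forall fun t ht =>
            div_nonneg (Real.rpow_nonneg (hM0 t) q) ht.1.le))
          (Ioc_subset_Ioc_left hs.1.le).eventuallyLE

lemma setIntegral_rpow_div_le_of_monotoneOn (hM0 : ∀ s, 0 ≤ M s) (hM : MonotoneOn M (Ioc 0 A))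
    (hq : 0 < q) (hqp : q ≤ p) (hint : IntegrableOn (fun s => M s ^ q / s) (Ioc 0 A)) {δ : ℝ}
    (hδ : δ ∈ Ioo 0 A) :
    ∫ s in Ioc 0 δ, M s ^ p / s ≤
      ((∫ s in Ioc 0 A, M s ^ q / s) ^ (1 / q)) ^ p / Real.log (A / δ) ^ ((p - q) / q) := by
  set I := ∫ s in Ioc 0 A, M s ^ q / s
  set L := Real.log (A / δ)
  set e := (p - q) / q
  have hL : 0 < L := Real.log_pos ((one_lt_div hδ.1).2 hδ.2)
  have h_nonneg : 0 ≤ᵐ[volume.restrict (Ioc 0 A)] fun s => M s ^ q / s :=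
    (ae_restrict_iff' measurableSet_Ioc).2 (Eventually.of_forall fun s hs =>
      div_nonneg (Real.rpow_nonneg (hM0 s) q) hs.1.le)
  have hI : 0 ≤ I := integral_nonneg_of_ae h_nonneg
  have hδA : Ioc 0 δ ⊆ Ioc 0 A := Ioc_subset_Ioc_right hδ.2.le
  have h_small : ∀ s ∈ Ioc 0 δ, M s ^ q ≤ I / L := fun s hs => by
    rw [le_div_iff₀ hL]
    refine le_trans ?_ (rpow_mul_log_le_setIntegral hM0 hM hq.le hint (hδA hs))
    refine mul_le_mul_of_nonneg_left ?_ (Real.rpow_nonneg (hM0 s) q)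
    have hA : 0 < A := hδ.1.trans hδ.2
    exact Real.log_le_log (div_pos hA hδ.1) (div_le_div_of_nonneg_left hA.le hs.1 hs.2)
  have h_pointwise : ∀ s ∈ Ioc 0 δ, M s ^ p / s ≤ (I / L) ^ e * (M s ^ q / s) := fun s hs => by
    have h_split : M s ^ p = (M s ^ q) ^ e * M s ^ q := by
      rw [← Real.rpow_mul (hM0 s), ← Real.rpow_add_of_nonneg (hM0 s)
        (mul_nonneg hq.le (div_nonneg (sub_nonneg.2 hqp) hq.le)) hq.le]
      congr 1
      field_simp
      ring
    rw [h_split, mul_div_assoc]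
    gcongr
    · exact div_nonneg (Real.rpow_nonneg (hM0 s) q) hs.1.le
    · exact Real.rpow_nonneg (hM0 s) q
    · exact h_small s hs
  calc ∫ s in Ioc 0 δ, M s ^ p / s ≤ ∫ s in Ioc 0 δ, (I / L) ^ e * (M s ^ q / s) :=
        setIntegral_mono_on
          ((integrableOn_rpow_div_of_monotoneOn hM0 hM hq.le hqp hint).mono_set hδA)
          ((hint.mono_set hδA).const_mul _) measurableSet_Ioc h_pointwise
    _ = (I / L) ^ e * ∫ s in Ioc 0 δ, M s ^ q / s := integral_const_mul _ _
    _ ≤ (I / L) ^ e * I := by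
        gcongr
        exact setIntegral_mono_set hint h_nonneg hδA.eventuallyLE
    _ = (I ^ (1 / q)) ^ p / L ^ e := by
        rw [Real.div_rpow hI hL.le, ← Real.rpow_mul hI, div_mul_eq_mul_div,
          ← Real.rpow_add_one' hI (by positivity)]
        congr 2
        simp only [e]
        field_simp
        ring

end MonotoneProfile

/-- if ω ∈ L^{(1,q)}(𝕋²) for some 1 ≤ q < 2 then ω ∈ L^{(1,2)}(𝕋²), with the
quantitative small-s decay
∫₀^δ M_s(ω)² ds/s ≤ ‖ω‖²_{L^{(1,q)}} / (log(|𝕋²|/δ))^{(2−q)/q}. -/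
theorem stmt19 (q : ℝ) (hq1 : 1 ≤ q) (hq2 : q < 2)
    (ω : Torus → ℝ) (hω : Integrable ω)
    (hωq : IntegrableOn (fun s => Ms ω s ^ q / s) (Set.Ioc 0 ((2 * Real.pi) ^ 2))) :
    IntegrableOn (fun s => Ms ω s ^ (2:ℝ) / s) (Set.Ioc 0 ((2 * Real.pi) ^ 2)) ∧
    ∀ δ ∈ Set.Ioo (0:ℝ) ((2 * Real.pi) ^ 2),
      (∫ s in Set.Ioc (0:ℝ) δ, Ms ω s ^ (2:ℝ) / s) ≤
        ((∫ s in Set.Ioc (0:ℝ) ((2 * Real.pi) ^ 2), Ms ω s ^ q / s) ^ (1/q)) ^ (2:ℝ) /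
          Real.log ((2 * Real.pi) ^ 2 / δ) ^ ((2 - q) / q) := by
  have hq : 0 < q := by linarith
  have hM := (monotoneOn_Ms hω).mono Ioc_subset_Icc_self
  exact ⟨integrableOn_rpow_div_of_monotoneOn (Ms_nonneg ω) hM hq.le hq2.le hωq,
    fun δ hδ => setIntegral_rpow_div_le_of_monotoneOn (Ms_nonneg ω) hM hq hq2.le hωq hδ⟩

end
end
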